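/- arXiv:2411.11983 — 3 statements merged into one kernel-verified Lean document; each statement's English description precedes it below -/
import Mathlib

section
/- If K is P-invariant then the occlusion kernel K_occ is P_occ-invariant: P_occ K_occ = P_occ. -/
open MeasureTheory ProbabilityTheory Filter

noncomputable section

namespace OcclusionPaper

variable {X : Type*} [MeasurableSpace X]

/-- The mean `μ_i = P_i(f)` of `f` under `P_i`, i.e. `P` conditioned to the region `A i`. -/
def regionMean (P : Measure X) {R : ℕ} (A : Fin R → Set X) (f : X → ℝ) (i : Fin R) : ℝ :=
  ∫ x, f x ∂(P[|A i])

/-- The resolution `→Pf(x) = ∑ i, μ_i 1{x ∈ A i}`. -/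
def res (P : Measure X) {R : ℕ} (A : Fin R → Set X) (f : X → ℝ) : X → ℝ :=
  fun x => ∑ i, Set.indicator (A i) (fun _ => regionMean P A f i) x

/-- The orthogonal counterpart `←Pf = f − →Pf`. -/
def orth (P : Measure X) {R : ℕ} (A : Fin R → Set X) (f : X → ℝ) : X → ℝ :=
  fun x => f x - res P A f x

/-- Covariance of `g` and `h` under `P`. -/
def covP {Y : Type*} [MeasurableSpace Y] (P : Measure Y) (g h : Y → ℝ) : ℝ :=
  (∫ y, g y * h y ∂P) - (∫ y, g y ∂P) * (∫ y, h y ∂P)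

/-- Action of the `k`-th iterate of a (measure-valued) transition kernel on a function:
`K^k g`. -/
def kerIter {Y : Type*} [MeasurableSpace Y] (κ : Y → Measure Y) : ℕ → (Y → ℝ) → Y → ℝ
  | 0, g => g
  | (k + 1), g => fun y => ∫ z, kerIter κ k g z ∂(κ y)

/-- The joint law of the first `n` steps `(X_1, …, X_n)` of a Markov chain with initial
distribution `μ` and transition kernel `κ`. -/
def chainLawF {Y : Type*} [MeasurableSpace Y] (μ : Measure Y) (κ : Y → Measure Y) :
    (n : ℕ) → Measure (Fin n → Y)
  | 0 => Measure.dirac (fun i : Fin 0 => i.elim0)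
  | 1 => μ.map (fun x _ => x)
  | (n + 2) => (chainLawF μ κ (n + 1)).bind
      (fun xs => (κ (xs (Fin.last n))).map (fun z => Fin.snoc xs z))

/-- The distribution `μ K^t` of a Markov chain with kernel `κ` after `t` steps from `μ`. -/
def evolveF {Y : Type*} [MeasurableSpace Y] (κ : Y → Measure Y) (μ : Measure Y) : ℕ → Measure Y
  | 0 => μ
  | (t + 1) => (evolveF κ μ t).bind κ

/-- `N_i`: the number of times the finite trajectory `xs` visits region `A i`. -/
def Nreg {R n : ℕ} (A : Fin R → Set X) (xs : Fin n → X) (i : Fin R) : ℕ :=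
  ∑ t : Fin n, Set.indicator (A i) (fun _ => (1 : ℕ)) (xs t)

/-- The fully occluded (ideal) estimator
`μ̂_ideal = n⁻¹ ∑_{i=1}^R ∑_{j=1}^{N_i} f(Y_{ij})`, evaluated on an outcome consisting of the
chain trajectory together with, for each region, an array of draws from `P_i`. -/
def idealEst {R n : ℕ} (A : Fin R → Set X) (f : X → ℝ)
    (ω : (Fin n → X) × (Fin R → Fin n → X)) : ℝ :=
  (n : ℝ)⁻¹ * ∑ i : Fin R, ∑ j : Fin n, if (j : ℕ) < Nreg A ω.1 i then f (ω.2 i j) else 0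

/-- The joint law of the chain `(X_1,…,X_n)` together with, for each region `i`, an i.i.d.
array `(Y_{ij})_j` of draws from `P_i`, independent of the chain (hence in particular
conditionally independent of it given the visited regions). -/
def jointLaw (P : Measure X) {R : ℕ} (A : Fin R → Set X) (κ : X → Measure X) (n : ℕ) :
    Measure ((Fin n → X) × (Fin R → Fin n → X)) :=
  (chainLawF P κ n).prod (Measure.pi fun i => Measure.pi fun _ : Fin n => P[|A i])

/-- Bernoulli distribution on `Bool` with success probability `p` (`true` has mass `p`). -/
def bern (p : ℝ) : Measure Bool :=
  ENNReal.ofReal p • Measure.dirac true + ENNReal.ofReal (1 - p) • Measure.dirac false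

/-- The conditional law of the pair `(s, y)` given the current chain position `x`:
`s ~ Bernoulli(α(ρ x))` and `y ~ P_{ρ x}` independently. -/
def mark (P : Measure X) {R : ℕ} (A : Fin R → Set X) (ρ : X → Fin R) (α : Fin R → ℝ) (x : X) :
    Measure (Bool × X) :=
  (bern (α (ρ x))).prod (P[|A (ρ x)])

/-- The occlusion kernel `K_occ((x,s,y) → (dx',s',dy'))
 = K(x → dx')·(α(ρ x')1{s'=1} + (1−α(ρ x'))1{s'=0})·P_{ρ x'}(dy')`. -/
def Kocc (P : Measure X) {R : ℕ} (A : Fin R → Set X) (ρ : X → Fin R) (α : Fin R → ℝ)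
    (κ : X → Measure X) : X × Bool × X → Measure (X × Bool × X) :=
  fun z => (κ z.1).bind fun x' => (mark P A ρ α x').map fun sy => (x', sy.1, sy.2)

/-- The measure `P_occ(dx,s,dy) = P(dx)·(α(ρ x)1{s=1} + (1−α(ρ x))1{s=0})·P_{ρ x}(dy)`. -/
def Pocc (P : Measure X) {R : ℕ} (A : Fin R → Set X) (ρ : X → Fin R) (α : Fin R → ℝ) :
    Measure (X × Bool × X) :=
  P.bind fun x => (mark P A ρ α x).map fun sy => (x, sy.1, sy.2)

/-- `f_occ(x,s,y) = 1{s=0} f(x) + 1{s=1} f(y)`. -/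
def focc (f : X → ℝ) : X × Bool × X → ℝ :=
  fun z => if z.2.1 then f z.2.2 else f z.1

/-- `f_α(x) = (1 − α(ρ x)) f(x) + α(ρ x) →Pf(x)`. -/
def falpha (P : Measure X) {R : ℕ} (A : Fin R → Set X) (ρ : X → Fin R) (α : Fin R → ℝ)
    (f : X → ℝ) : X → ℝ :=
  fun x => (1 - α (ρ x)) * f x + α (ρ x) * res P A f x

/-- `f_a(x) = (1 − α(ρ x)) f(x)`. -/
def fa {R : ℕ} (ρ : X → Fin R) (α : Fin R → ℝ) (f : X → ℝ) : X → ℝ :=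
  fun x => (1 - α (ρ x)) * f x

end OcclusionPaper

/-! `P_occ` is `P` pushed through the kernel `x ↦ δ_x ⊗ (Bernoulli(α(ρ x)) ⊗ P_{ρ x})`, which
keeps `x` as first coordinate and has mass one. `K_occ` reads only that first coordinate, moves it
by `K` and marks the result afresh with the same kernel. So one step of `K_occ` from `P_occ` is
`P K` marked, which is `P` marked, i.e. `P_occ`. -/

namespace MeasureTheory.Measure

theorem bind_map {α β γ : Type*} [MeasurableSpace α] [MeasurableSpace β] [MeasurableSpace γ]
    {μ : Measure α} {f : α → β} {g : β → Measure γ} (hf : Measurable f) (hg : Measurable g) :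
    (μ.map f).bind g = μ.bind (g ∘ f) := by
  ext s hs
  have hgs : Measurable fun b => g b s := measurable_coe hs |>.comp hg
  rw [bind_apply hs hg.aemeasurable, lintegral_map hgs hf, bind_apply hs (hg.comp hf).aemeasurable]
  rfl

theorem bind_bind_comp_eq_self_of_map_eq_dirac {α γ : Type*} [MeasurableSpace α]
    [MeasurableSpace γ] {μ : Measure α} {κ : α → Measure α} {η : α → Measure γ} {f : γ → α}
    (hκ : Measurable κ) (hη : Measurable η) (hf : Measurable f)
    (hηf : ∀ x, (η x).map f = dirac x) (hμκ : μ.bind κ = μ) :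
    (μ.bind η).bind (fun z => (κ (f z)).bind η) = μ.bind η := by
  have hκη : Measurable fun x => (κ x).bind η := measurable_bind' hη |>.comp hκ
  calc (μ.bind η).bind (fun z => (κ (f z)).bind η)
      = μ.bind (fun x => (η x).bind (fun z => (κ (f z)).bind η)) :=
        bind_bind hη.aemeasurable (hκη.comp hf).aemeasurable
    _ = μ.bind (fun x => ((η x).map f).bind (fun y => (κ y).bind η)) := by
        simp_rw [bind_map hf hκη]; rfl
    _ = (μ.bind κ).bind η := by
        simp_rw [hηf, dirac_bind hκη, bind_bind hκ.aemeasurable hη.aemeasurable]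
    _ = μ.bind η := by rw [hμκ]

end MeasureTheory.Measure

namespace ProbabilityTheory.Kernel

theorem measurable_map_prodMk {α β : Type*} [MeasurableSpace α] [MeasurableSpace β]
    (κ : Kernel α β) [IsSFiniteKernel κ] : Measurable fun x => (κ x).map (Prod.mk x) := by
  have : (fun x => (κ x).map (Prod.mk x)) = deterministic id measurable_id ×ₖ κ := by
    ext x : 1
    rw [prod_apply, deterministic_apply, id, Measure.dirac_prod]
  exact this ▸ Kernel.measurable _

end ProbabilityTheory.Kernel

namespace OcclusionPaper

theorem isProbabilityMeasure_bern {p : ℝ} (h0 : 0 ≤ p) (h1 : p ≤ 1) :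
    IsProbabilityMeasure (bern p) := by
  constructor
  simp only [bern, Measure.add_apply, Measure.smul_apply, measure_univ, smul_eq_mul, mul_one]
  rw [← ENNReal.ofReal_add h0 (by linarith)]
  norm_num

theorem isProbabilityMeasure_mark {X : Type*} [MeasurableSpace X] (P : Measure X)
    [IsFiniteMeasure P] {R : ℕ} (A : Fin R → Set X) (hpos : ∀ i, 0 < P (A i)) (ρ : X → Fin R)
    (α : Fin R → ℝ) (hα0 : ∀ i, 0 ≤ α i) (hα1 : ∀ i, α i ≤ 1) (x : X) :
    IsProbabilityMeasure (mark P A ρ α x) :=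
  have := isProbabilityMeasure_bern (hα0 (ρ x)) (hα1 (ρ x))
  have := cond_isProbabilityMeasure (μ := P) (hpos (ρ x)).ne'
  inferInstanceAs (IsProbabilityMeasure ((bern _).prod _))

theorem measurable_mark {X : Type*} [MeasurableSpace X] (P : Measure X) {R : ℕ}
    (A : Fin R → Set X) (ρ : X → Fin R) (α : Fin R → ℝ) (hρm : Measurable ρ) :
    Measurable (mark P A ρ α) :=
  show Measurable ((fun i => (bern (α i)).prod (P[|A i])) ∘ ρ) from .comp .of_discrete hρm

theorem Kocc_invariant_general
    {X : Type*} [MeasurableSpace X]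
    (P : Measure X) [IsProbabilityMeasure P] {R : ℕ} (A : Fin R → Set X)
    (hpos : ∀ i, 0 < P (A i))
    (ρ : X → Fin R) (hρm : Measurable ρ)
    (α : Fin R → ℝ) (hα0 : ∀ i, 0 ≤ α i) (hα1 : ∀ i, α i ≤ 1)
    (K : Kernel X X) (hK : K.Invariant P) :
    (Pocc P A ρ α).bind (Kocc P A ρ α (fun x => K x)) = Pocc P A ρ α := by
  let markK : Kernel X (Bool × X) := ⟨mark P A ρ α, measurable_mark P A ρ α hρm⟩
  have : IsMarkovKernel markK := ⟨isProbabilityMeasure_mark P A hpos ρ α hα0 hα1⟩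
  have hfst (x : X) : ((markK x).map (Prod.mk x)).map Prod.fst = Measure.dirac x := by
    rw [Measure.map_map measurable_fst measurable_prodMk_left, Function.comp_def,
      Measure.map_const, measure_univ, one_smul]
  exact Measure.bind_bind_comp_eq_self_of_map_eq_dirac K.measurable markK.measurable_map_prodMk
    measurable_fst hfst hK

/-- If `K` is `P`-invariant then the occlusion kernel `K_occ` is
`P_occ`-invariant: `P_occ K_occ = P_occ`. -/
theorem Kocc_invariant
    {X : Type*} [MeasurableSpace X]
    (P : Measure X) [IsProbabilityMeasure P] {R : ℕ} (A : Fin R → Set X)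
    (hA : ∀ i, MeasurableSet (A i))
    (hdisj : Pairwise fun i j => Disjoint (A i) (A j))
    (hcover : (⋃ i, A i) = Set.univ)
    (hpos : ∀ i, 0 < P (A i))
    (ρ : X → Fin R) (hρm : Measurable ρ) (hρ : ∀ x, x ∈ A (ρ x))
    (α : Fin R → ℝ) (hα0 : ∀ i, 0 ≤ α i) (hα1 : ∀ i, α i ≤ 1)
    (K : Kernel X X) [IsMarkovKernel K] (hK : K.Invariant P) :
    (Pocc P A ρ α).bind (Kocc P A ρ α (fun x => K x)) = Pocc P A ρ α :=
  Kocc_invariant_general P A hpos ρ hρm α hα0 hα1 K hK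

end OcclusionPaper
end
end

section
/- If the kernel K is P-reversible, then the occlusion kernel K_occ is P_occ-reversible, i.e. P_occ(dx,s,dy)·K_occ((x,s,y) → (dx',s',dy')) = P_occ(dx',s',dy')·K_occ((x',s',y') → (dx,s,dy)) for all measurable rectangles. -/
open MeasureTheory ProbabilityTheory Filter

noncomputable section

/-! Write `η x` for the law of the mark `(s, y)` attached to the position `x`. Then
`P_occ = P ⊗ η`, and `K_occ` moves the position by `K` and draws a fresh mark from `η` at the new
position. Under `P_occ ⊗ K_occ` the pair of positions `(x, x')` therefore has law `P ⊗ K`, which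
reversibility of `K` makes invariant under swapping, and given `(x, x')` the two marks are
independent with laws `η x` and `η x'`. So the mass of `(B₁ × Bs × B₂) × (C₁ × Cs × C₂)` is
`∫_{B₁ × C₁} η x (Bs × B₂) · η x' (Cs × C₂) d(P ⊗ K)(x, x')`, which is symmetric in the two
rectangles. -/

namespace MeasureTheory.Measure

variable {α : Type*} [MeasurableSpace α]

lemma setLIntegral_prod_mul_of_map_swap {μ : Measure (α × α)} (h : μ.map Prod.swap = μ)
    (s u : Set α) (f g : α → ENNReal) :
    ∫⁻ p in s ×ˢ u, f p.1 * g p.2 ∂μ = ∫⁻ p in u ×ˢ s, g p.1 * f p.2 ∂μ := by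
  let e : α × α ≃ᵐ α × α := MeasurableEquiv.prodComm
  have he : ⇑e = Prod.swap := rfl
  calc ∫⁻ p in s ×ˢ u, f p.1 * g p.2 ∂μ = ∫⁻ p in s ×ˢ u, f p.1 * g p.2 ∂(μ.map e) := by
        rw [he, h]
    _ = ∫⁻ p in e ⁻¹' (s ×ˢ u), f (e p).1 * g (e p).2 ∂μ := by
        rw [e.restrict_map, lintegral_map_equiv]
    _ = ∫⁻ p in u ×ˢ s, g p.1 * f p.2 ∂μ := by
        simp only [he, Set.preimage_swap_prod, Prod.fst_swap, Prod.snd_swap, mul_comm]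

end MeasureTheory.Measure

namespace ProbabilityTheory.Kernel

variable {α β : Type*} [MeasurableSpace α] [MeasurableSpace β]

lemma isFiniteKernel_of_finite [Finite α] (κ : Kernel α β) (h : ∀ a, κ a Set.univ < ⊤) :
    IsFiniteKernel κ := by
  have := Fintype.ofFinite α
  exact ⟨⟨∑ a, κ a Set.univ, ENNReal.sum_lt_top.mpr fun a _ => h a,
    fun a => Finset.single_le_sum (f := fun a => κ a Set.univ) (fun _ _ => bot_le)
      (Finset.mem_univ a)⟩⟩

/-- Move the position by `κ`, then replace the mark by a fresh draw from `η` at the new position. -/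
def marked (κ : Kernel α α) (η : Kernel α β) : Kernel (α × β) (α × β) :=
  prodMkRight β (κ ⊗ₖ prodMkLeft α η)

variable {κ : Kernel α α} {η : Kernel α β} {π : Measure α}

lemma marked_apply_prod [IsSFiniteKernel κ] [IsSFiniteKernel η] (z : α × β) {s : Set α}
    {t : Set β} (hs : MeasurableSet s) (ht : MeasurableSet t) :
    marked κ η z (s ×ˢ t) = ∫⁻ x in s, η x t ∂κ z.1 := by
  rw [marked, prodMkRight_apply, compProd_apply_prod hs ht]
  rfl

lemma setLIntegral_marked_prod [SFinite π] [IsSFiniteKernel κ] [IsSFiniteKernel η]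
    {s u : Set α} {t v : Set β} (hs : MeasurableSet s) (ht : MeasurableSet t)
    (hu : MeasurableSet u) (hv : MeasurableSet v) :
    ∫⁻ z in s ×ˢ t, marked κ η z (u ×ˢ v) ∂(π ⊗ₘ η)
      = ∫⁻ p in s ×ˢ u, η p.1 t * η p.2 v ∂(π ⊗ₘ κ) := by
  have hηv : Measurable fun x => η x v := η.measurable_coe hv
  rw [Measure.setLIntegral_compProd ((marked κ η).measurable_coe (hu.prod hv)) hs ht,
    Measure.setLIntegral_compProd (f := fun p : α × α => η p.1 t * η p.2 v)
      (((η.measurable_coe ht).comp measurable_fst).mul (hηv.comp measurable_snd)) hs hu]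
  refine setLIntegral_congr_fun hs fun x _ => ?_
  simp only [marked_apply_prod _ hu hv, lintegral_const_mul _ hηv]
  rw [MeasureTheory.setLIntegral_const, mul_comm]

lemma IsReversible.map_swap_compProd [IsFiniteMeasure π] [IsFiniteKernel κ]
    (h : κ.IsReversible π) : (π ⊗ₘ κ).map Prod.swap = π ⊗ₘ κ := by
  refine Measure.ext_prod fun hs ht => ?_
  rw [Measure.map_apply measurable_swap (hs.prod ht), Set.preimage_swap_prod,
    Measure.compProd_apply_prod ht hs, Measure.compProd_apply_prod hs ht, h ht hs]

lemma IsReversible.setLIntegral_marked_prod_comm [IsFiniteMeasure π] [IsFiniteKernel κ]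
    [IsSFiniteKernel η] (h : κ.IsReversible π) {s u : Set α} {t v : Set β}
    (hs : MeasurableSet s) (ht : MeasurableSet t) (hu : MeasurableSet u) (hv : MeasurableSet v) :
    ∫⁻ z in s ×ˢ t, marked κ η z (u ×ˢ v) ∂(π ⊗ₘ η)
      = ∫⁻ z in u ×ˢ v, marked κ η z (s ×ˢ t) ∂(π ⊗ₘ η) := by
  rw [setLIntegral_marked_prod hs ht hu hv, setLIntegral_marked_prod hu hv hs ht]
  exact Measure.setLIntegral_prod_mul_of_map_swap h.map_swap_compProd s u
    (fun x => η x t) (fun x => η x v)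

end ProbabilityTheory.Kernel

namespace OcclusionPaper

section

variable {X : Type*} [MeasurableSpace X]

instance (p : ℝ) : IsFiniteMeasure (bern p) :=
  ⟨by simp [bern]⟩

def markKernel (P : Measure X) {R : ℕ} (A : Fin R → Set X) (ρ : X → Fin R) (hρ : Measurable ρ)
    (α : Fin R → ℝ) : Kernel X (Bool × X) :=
  (Kernel.ofFunOfCountable fun i => (bern (α i)).prod (P[|A i])).comap ρ hρ

variable (P : Measure X) {R : ℕ} (A : Fin R → Set X) {ρ : X → Fin R} (hρ : Measurable ρ)
  (α : Fin R → ℝ)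

instance : IsFiniteKernel (markKernel P A ρ hρ α) :=
  have : IsFiniteKernel (Kernel.ofFunOfCountable fun i => (bern (α i)).prod (P[|A i])) :=
    Kernel.isFiniteKernel_of_finite _ fun i => measure_lt_top ((bern (α i)).prod (P[|A i])) _
  Kernel.IsFiniteKernel.comap _ hρ

lemma map_mark_eq_id_prod_markKernel :
    (fun x => (mark P A ρ α x).map fun sy => (x, sy.1, sy.2))
      = ⇑(Kernel.id ×ₖ markKernel P A ρ hρ α) := by
  ext1 x
  rw [Kernel.prod_apply, Kernel.id_apply, Measure.dirac_prod]
  rfl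

lemma Pocc_eq_compProd [SFinite P] : Pocc P A ρ α = P ⊗ₘ markKernel P A ρ hρ α := by
  rw [Measure.compProd_eq_comp_prod, Pocc, map_mark_eq_id_prod_markKernel P A hρ α]

lemma Kocc_eq_marked (K : Kernel X X) [IsSFiniteKernel K] (z : X × Bool × X) :
    Kocc P A ρ α (fun x => K x) z = K.marked (markKernel P A ρ hρ α) z := by
  rw [Kernel.marked, Kernel.prodMkRight_apply, Kernel.compProd_prodMkLeft_eq_comp,
    Kernel.comp_apply, Kocc, map_mark_eq_id_prod_markKernel P A hρ α]

end

theorem Kocc_reversible_general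
    {X : Type*} [MeasurableSpace X]
    (P : Measure X) [IsProbabilityMeasure P] {R : ℕ} (A : Fin R → Set X)
    (ρ : X → Fin R) (hρm : Measurable ρ)
    (α : Fin R → ℝ)
    (K : Kernel X X) [IsMarkovKernel K]
    (hrev : ∀ B C : Set X, MeasurableSet B → MeasurableSet C →
      ∫⁻ x in B, K x C ∂P = ∫⁻ x in C, K x B ∂P) :
    ∀ (B₁ B₂ C₁ C₂ : Set X) (Bs Cs : Set Bool),
      MeasurableSet B₁ → MeasurableSet B₂ → MeasurableSet C₁ → MeasurableSet C₂ →
      ∫⁻ z in B₁ ×ˢ (Bs ×ˢ B₂),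
          Kocc P A ρ α (fun x => K x) z (C₁ ×ˢ (Cs ×ˢ C₂)) ∂(Pocc P A ρ α)
        = ∫⁻ z in C₁ ×ˢ (Cs ×ˢ C₂),
            Kocc P A ρ α (fun x => K x) z (B₁ ×ˢ (Bs ×ˢ B₂)) ∂(Pocc P A ρ α) := by
  intro B₁ B₂ C₁ C₂ Bs Cs hB₁ hB₂ hC₁ hC₂
  have hrevK : K.IsReversible P := fun B C hB hC => hrev B C hB hC
  simp only [Kocc_eq_marked P A hρm α K, Pocc_eq_compProd P A hρm α]
  exact hrevK.setLIntegral_marked_prod_comm hB₁ (MeasurableSet.of_discrete.prod hB₂) hC₁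
    (MeasurableSet.of_discrete.prod hC₂)

/-- If `K` is `P`-reversible then `K_occ` is `P_occ`-reversible (detailed
balance over all measurable rectangles). -/
theorem Kocc_reversible
    {X : Type*} [MeasurableSpace X]
    (P : Measure X) [IsProbabilityMeasure P] {R : ℕ} (A : Fin R → Set X)
    (hA : ∀ i, MeasurableSet (A i))
    (hdisj : Pairwise fun i j => Disjoint (A i) (A j))
    (hcover : (⋃ i, A i) = Set.univ)
    (hpos : ∀ i, 0 < P (A i))
    (ρ : X → Fin R) (hρm : Measurable ρ) (hρ : ∀ x, x ∈ A (ρ x))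
    (α : Fin R → ℝ) (hα0 : ∀ i, 0 ≤ α i) (hα1 : ∀ i, α i ≤ 1)
    (K : Kernel X X) [IsMarkovKernel K] (hK : K.Invariant P)
    (hrev : ∀ B C : Set X, MeasurableSet B → MeasurableSet C →
      ∫⁻ x in B, K x C ∂P = ∫⁻ x in C, K x B ∂P) :
    ∀ (B₁ B₂ C₁ C₂ : Set X) (Bs Cs : Set Bool),
      MeasurableSet B₁ → MeasurableSet B₂ → MeasurableSet C₁ → MeasurableSet C₂ →
      ∫⁻ z in B₁ ×ˢ (Bs ×ˢ B₂),
          Kocc P A ρ α (fun x => K x) z (C₁ ×ˢ (Cs ×ˢ C₂)) ∂(Pocc P A ρ α)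
        = ∫⁻ z in C₁ ×ˢ (Cs ×ˢ C₂),
            Kocc P A ρ α (fun x => K x) z (B₁ ×ˢ (Bs ×ˢ B₂)) ∂(Pocc P A ρ α) :=
  Kocc_reversible_general P A ρ hρm α K hrev

end OcclusionPaper
end
end

section
/- Correctness of the restricted rejection sampler: let Q be a probability measure on X with P absolutely continuous with respect to Q, and let w̃ := Z·(dP/dQ) for some constant Z > 0 be the unnormalised Radon–Nikodym derivative. Fix C > 0 and set X_C := {y ∈ X : w̃(y)/C ≤ 1}, and assume P(X_C) > 0. Let Y ∼ Q and U ∼ Uniform[0,1] be independent. Then conditionally on the event {U ≤ w̃(Y)/C} ∩ {Y ∈ X_C}, the law of Y is P conditioned to X_C: for every measurable A ⊆ X, ℙ(Y ∈ A | U ≤ w̃(Y)/C, Y ∈ X_C) = P(A ∩ X_C)/P(X_C). -/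
/-! On `X_C` a proposal `y ∼ Q` is accepted with probability `w̃(y)/C = (Z/C)·(dP/dQ)(y)`, so by
Fubini the probability of accepting a proposal in a measurable `S ⊆ X_C` is
`∫_S (Z/C)·(dP/dQ) dQ = (Z/C)·P(S)`. Conditioning on acceptance divides out the unknown
constant `Z/C`. -/

open MeasureTheory ProbabilityTheory Filter

noncomputable section

open Set

namespace OcclusionPaper

lemma volume_restrict_unitInterval_Iic {t : ℝ} (ht : t ≤ 1) :
    volume.restrict (Icc (0 : ℝ) 1) (Iic t) = ENNReal.ofReal t := by
  have hIcc : Iic t ∩ Icc 0 1 = Icc 0 t := by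
    ext u; simp only [mem_inter_iff, mem_Iic, mem_Icc]; grind
  rw [Measure.restrict_apply measurableSet_Iic, hIcc, Real.volume_Icc, sub_zero]

section Acceptance

variable {X : Type*} [MeasurableSpace X]

def acceptEvent (s : Set X) (g : X → ℝ) : Set (X × ℝ) := {p | p.1 ∈ s ∧ p.2 ≤ g p.1}

lemma measurableSet_acceptEvent {s : Set X} (hs : MeasurableSet s) {g : X → ℝ}
    (hg : Measurable g) : MeasurableSet (acceptEvent s g) :=
  (measurable_fst hs).inter (measurableSet_le measurable_snd (hg.comp measurable_fst))

lemma prod_unitInterval_acceptEvent (μ : Measure X) [SFinite μ] {s : Set X}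
    (hs : MeasurableSet s) {g : X → ℝ} (hg : Measurable g) (hg_le : ∀ x ∈ s, g x ≤ 1) :
    μ.prod (volume.restrict (Icc (0 : ℝ) 1)) (acceptEvent s g)
      = ∫⁻ x in s, ENNReal.ofReal (g x) ∂μ := by
  rw [Measure.prod_apply (measurableSet_acceptEvent hs hg), ← lintegral_indicator hs]
  refine lintegral_congr fun x => ?_
  by_cases hx : x ∈ s
  · have hsec : Prod.mk x ⁻¹' acceptEvent s g = Iic (g x) := by
      ext u; simp [acceptEvent, hx]
    rw [hsec, indicator_of_mem hx, volume_restrict_unitInterval_Iic (hg_le x hx)]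
  · have hsec : Prod.mk x ⁻¹' acceptEvent s g = ∅ := by
      ext u; simp [acceptEvent, hx]
    rw [hsec, indicator_of_notMem hx, measure_empty]

lemma setLIntegral_ofReal_of_ae_eq_mul_rnDeriv {P Q : Measure X} [SigmaFinite P]
    [SigmaFinite Q] (hPQ : P ≪ Q) {c : ℝ} (hc : 0 ≤ c) {f : X → ℝ}
    (hf : ∀ᵐ x ∂Q, f x = c * (P.rnDeriv Q x).toReal) (s : Set X) :
    ∫⁻ x in s, ENNReal.ofReal (f x) ∂Q = ENNReal.ofReal c * P s := by
  have hf' : ∀ᵐ x ∂Q, ENNReal.ofReal (f x) = ENNReal.ofReal c * P.rnDeriv Q x := by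
    filter_upwards [hf, Measure.rnDeriv_ne_top P Q] with x hx hfin
    rw [hx, ENNReal.ofReal_mul hc, ENNReal.ofReal_toReal hfin]
  rw [lintegral_congr_ae (ae_restrict_of_ae hf'),
    lintegral_const_mul' _ _ ENNReal.ofReal_ne_top, Measure.setLIntegral_rnDeriv hPQ]

end Acceptance

theorem rejection_sampler_correctness_general
    {X : Type*} [MeasurableSpace X]
    (P Q : Measure X) [IsProbabilityMeasure P] [IsProbabilityMeasure Q]
    (hac : P ≪ Q)
    (Z : ℝ) (hZ : 0 < Z)
    (w : X → ℝ) (hwm : Measurable w)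
    (hw : ∀ᵐ x ∂Q, w x = Z * (P.rnDeriv Q x).toReal)
    (C : ℝ) (hC : 0 < C) :
    ∀ B : Set X, MeasurableSet B →
      ((Q.prod (volume.restrict (Set.Icc (0 : ℝ) 1)))[|
          {p : X × ℝ | p.2 ≤ w p.1 / C ∧ w p.1 / C ≤ 1}]) {p : X × ℝ | p.1 ∈ B}
        = P (B ∩ {y | w y / C ≤ 1}) / P {y | w y / C ≤ 1} := by
  intro B hB
  set XC : Set X := {y | w y / C ≤ 1}
  have hwC : Measurable fun x => w x / C := hwm.div_const C
  have hXC : MeasurableSet XC := measurableSet_le hwC measurable_const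
  have hZC : 0 < Z / C := div_pos hZ hC
  have hmass : ∀ S ⊆ XC, MeasurableSet S →
      Q.prod (volume.restrict (Icc (0 : ℝ) 1)) (acceptEvent S (w · / C))
        = ENNReal.ofReal (Z / C) * P S := fun S hSXC hS => by
    rw [prod_unitInterval_acceptEvent Q hS hwC fun x hx => hSXC hx]
    refine setLIntegral_ofReal_of_ae_eq_mul_rnDeriv hac hZC.le ?_ S
    filter_upwards [hw] with x hx
    rw [hx]; ring
  have hE : {p : X × ℝ | p.2 ≤ w p.1 / C ∧ w p.1 / C ≤ 1} = acceptEvent XC (w · / C) := by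
    ext p; simp [acceptEvent, XC, and_comm]
  have hEB : acceptEvent XC (w · / C) ∩ {p | p.1 ∈ B} = acceptEvent (B ∩ XC) (w · / C) := by
    ext p; simp only [acceptEvent, mem_inter_iff, mem_ofPred_eq]; tauto
  rw [hE, cond_apply (measurableSet_acceptEvent hXC hwC), hEB,
    hmass _ inter_subset_right (hB.inter hXC), hmass XC subset_rfl hXC, ← ENNReal.div_eq_inv_mul,
    ENNReal.mul_div_mul_left _ _ (ENNReal.ofReal_pos.mpr hZC).ne' ENNReal.ofReal_ne_top]

/-- Correctness of the restricted rejection sampler: with `Y ~ Q` and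
`U ~ Uniform[0,1]` independent, conditionally on `{U ≤ w̃(Y)/C} ∩ {Y ∈ X_C}`
(where `X_C = {y : w̃(y)/C ≤ 1}`), the law of `Y` is `P` conditioned to `X_C`. -/
theorem rejection_sampler_correctness
    {X : Type*} [MeasurableSpace X]
    (P Q : Measure X) [IsProbabilityMeasure P] [IsProbabilityMeasure Q]
    (hac : P ≪ Q)
    (Z : ℝ) (hZ : 0 < Z)
    (w : X → ℝ) (hwm : Measurable w)
    (hw : ∀ᵐ x ∂Q, w x = Z * (P.rnDeriv Q x).toReal)
    (C : ℝ) (hC : 0 < C)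
    (hXC : 0 < P {y | w y / C ≤ 1}) :
    ∀ B : Set X, MeasurableSet B →
      ((Q.prod (volume.restrict (Set.Icc (0 : ℝ) 1)))[|
          {p : X × ℝ | p.2 ≤ w p.1 / C ∧ w p.1 / C ≤ 1}]) {p : X × ℝ | p.1 ∈ B}
        = P (B ∩ {y | w y / C ≤ 1}) / P {y | w y / C ≤ 1} :=
  rejection_sampler_correctness_general P Q hac Z hZ w hwm hw C hC

end OcclusionPaper
end
end
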